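/- Every even wheel W_{2k} (k ≥ 1) is ℤ₃-connected. -/

import Mathlib

/-- A finite loopless multigraph: each edge has an ordered pair of distinct endpoints
(the ordering is immaterial; it is only used to describe orientations). -/
structure Multigraph : Type 1 where
  V : Type
  fintypeV : Fintype V
  decEqV : DecidableEq V
  E : Type
  fintypeE : Fintype E
  decEqE : DecidableEq E
  ends : E → V × V
  loopless : ∀ e, (ends e).1 ≠ (ends e).2

attribute [instance] Multigraph.fintypeV Multigraph.decEqV Multigraph.fintypeE Multigraph.decEqE

namespace Multigraph

variable (G : Multigraph)

/-- Tail of an edge under an orientation `D` (`true` = directed from first to second end). -/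
def tail (D : G.E → Bool) (e : G.E) : G.V := if D e then (G.ends e).1 else (G.ends e).2

/-- Head of an edge under an orientation `D`. -/
def head (D : G.E → Bool) (e : G.E) : G.V := if D e then (G.ends e).2 else (G.ends e).1

/-- Out-degree of `v` under orientation `D`. -/
def outDeg (D : G.E → Bool) (v : G.V) : ℕ := (Finset.univ.filter fun e => G.tail D e = v).card

/-- In-degree of `v` under orientation `D`. -/
def inDeg (D : G.E → Bool) (v : G.V) : ℕ := (Finset.univ.filter fun e => G.head D e = v).card

/-- A modulo 3-orientation. -/
def HasMod3Orientation : Prop :=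
  ∃ D : G.E → Bool, ∀ v : G.V, ((G.outDeg D v : ZMod 3) = (G.inDeg D v : ZMod 3))

/-- A nowhere-zero 3-flow. -/
def HasNowhereZero3Flow : Prop :=
  ∃ (D : G.E → Bool) (f : G.E → ℤ),
    (∀ e, 1 ≤ |f e| ∧ |f e| ≤ 2) ∧
    (∀ v : G.V,
      (∑ e : G.E, if G.tail D e = v then f e else 0) =
      (∑ e : G.E, if G.head D e = v then f e else 0))

/-- `ℤ₃`-connectivity. -/
def Z3Connected : Prop :=
  ∀ b : G.V → ZMod 3, (∑ v : G.V, b v) = 0 →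
    ∃ D : G.E → Bool, ∀ v : G.V, (G.outDeg D v : ZMod 3) - (G.inDeg D v : ZMod 3) = b v

/-- Degree of a vertex. -/
def degree (v : G.V) : ℕ :=
  (Finset.univ.filter fun e => (G.ends e).1 = v ∨ (G.ends e).2 = v).card

/-- Minimum degree `δ(G)`. -/
noncomputable def minDegree : ℕ := sInf (Set.range G.degree)

/-- The edge cut `∂_G(S)`. -/
def cut (S : Finset G.V) : Finset G.E :=
  Finset.univ.filter fun e =>
    ((G.ends e).1 ∈ S ∧ (G.ends e).2 ∉ S) ∨ ((G.ends e).2 ∈ S ∧ (G.ends e).1 ∉ S)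

def Adjacent (u v : G.V) : Prop :=
  ∃ e : G.E, G.ends e = (u, v) ∨ G.ends e = (v, u)

def IsIndepSet (S : Finset G.V) : Prop :=
  ∀ u ∈ S, ∀ v ∈ S, u ≠ v → ¬ G.Adjacent u v

/-- The independence number `α(G)`. -/
noncomputable def indepNum : ℕ := sSup {n : ℕ | ∃ S : Finset G.V, G.IsIndepSet S ∧ S.card = n}

def FiveEdgeConnected : Prop :=
  ∀ S : Finset G.V, S.Nonempty → S ≠ Finset.univ → 5 ≤ (G.cut S).card

/-- Every odd edge cut has at least 5 edges. -/
def Odd5EdgeConnected : Prop :=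
  ∀ S : Finset G.V, Odd (G.cut S).card → 5 ≤ (G.cut S).card

/-- `G` contains `K₄` as a subgraph. -/
def ContainsK4 : Prop :=
  ∃ a b c d : G.V, a ≠ b ∧ a ≠ c ∧ a ≠ d ∧ b ≠ c ∧ b ≠ d ∧ c ≠ d ∧
    G.Adjacent a b ∧ G.Adjacent a c ∧ G.Adjacent a d ∧
    G.Adjacent b c ∧ G.Adjacent b d ∧ G.Adjacent c d

/-- The neighbourhood `N(X)`: vertices outside `X` with a neighbour in `X`. -/
noncomputable def neighborFinset (X : Finset G.V) : Finset G.V := by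
  classical
  exact Finset.univ.filter fun y => y ∉ X ∧ ∃ x ∈ X, G.Adjacent x y

/-- Induced subgraph on a vertex set `S`. -/
def induce (S : Finset G.V) : Multigraph where
  V := {v // v ∈ S}
  fintypeV := inferInstance
  decEqV := inferInstance
  E := {e : G.E // (G.ends e).1 ∈ S ∧ (G.ends e).2 ∈ S}
  fintypeE := inferInstance
  decEqE := inferInstance
  ends := fun e => (⟨(G.ends e.1).1, e.2.1⟩, ⟨(G.ends e.1).2, e.2.2⟩)
  loopless := fun e h => G.loopless e.1 (congrArg Subtype.val h)

/-- The relation identifying the two ends of each edge in `F`. -/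
def contractRel (F : Set G.E) (x y : G.V) : Prop :=
  ∃ e ∈ F, G.ends e = (x, y) ∨ G.ends e = (y, x)

/-- Contraction of a set `F` of edges: identify endpoints of edges of `F`
(via the equivalence closure), delete the edges of `F` and all resulting loops. -/
noncomputable def contractEdges (F : Set G.E) : Multigraph := by
  classical
  exact
    { V := Quot (G.contractRel F)
      fintypeV := Fintype.ofSurjective (Quot.mk _) (fun q => Quot.inductionOn q fun a => ⟨a, rfl⟩)
      decEqV := Classical.decEq _
      E := {e : G.E // e ∉ F ∧
            Quot.mk (G.contractRel F) (G.ends e).1 ≠ Quot.mk (G.contractRel F) (G.ends e).2}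
      fintypeE := Subtype.fintype _
      decEqE := Classical.decEq _
      ends := fun e => (Quot.mk _ (G.ends e.1).1, Quot.mk _ (G.ends e.1).2)
      loopless := fun e => e.2.2 }

end Multigraph

/-- A subgraph of a multigraph. -/
structure Multigraph.Subgraph (G : Multigraph) where
  verts : Finset G.V
  edges : Finset G.E
  ends_mem : ∀ e ∈ edges, (G.ends e).1 ∈ verts ∧ (G.ends e).2 ∈ verts

namespace Multigraph

/-- A subgraph as a multigraph in its own right. -/
def Subgraph.toMultigraph {G : Multigraph} (H : G.Subgraph) : Multigraph where
  V := {v // v ∈ H.verts}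
  fintypeV := inferInstance
  decEqV := inferInstance
  E := {e // e ∈ H.edges}
  fintypeE := inferInstance
  decEqE := inferInstance
  ends := fun e => (⟨(G.ends e.1).1, (H.ends_mem e.1 e.2).1⟩, ⟨(G.ends e.1).2, (H.ends_mem e.1 e.2).2⟩)
  loopless := fun e h => G.loopless e.1 (congrArg Subtype.val h)

/-- `G` is `⟨ℤ₃⟩`-reduced: it has no `ℤ₃`-connected subgraph with at least two vertices. -/
def Z3Reduced (G : Multigraph) : Prop :=
  ∀ H : G.Subgraph, H.toMultigraph.Z3Connected → H.verts.card ≤ 1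

/-- The contraction `G/H` of a subgraph. -/
noncomputable def contractSubgraph (G : Multigraph) (H : G.Subgraph) : Multigraph :=
  G.contractEdges {e | e ∈ H.edges}

/-- The `⟨ℤ₃⟩`-reduction of `G`: contract (the edges of) all maximal `ℤ₃`-connected
subgraphs of `G`. -/
noncomputable def reduction (G : Multigraph) : Multigraph :=
  G.contractEdges {e | ∃ H : G.Subgraph, H.toMultigraph.Z3Connected ∧ e ∈ H.edges}

end Multigraph

/-- `r(n)`: the maximum number of edges of a `⟨ℤ₃⟩`-reduced graph on `n` vertices. -/
noncomputable def edgeMaxReduced (n : ℕ) : ℕ :=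
  sSup {m : ℕ | ∃ G : Multigraph, G.Z3Reduced ∧ Fintype.card G.V = n ∧ Fintype.card G.E = m}

/-- The complete graph `K_n`. -/
def completeK (n : ℕ) : Multigraph where
  V := Fin n
  fintypeV := inferInstance
  decEqV := inferInstance
  E := {p : Fin n × Fin n // p.1 < p.2}
  fintypeE := inferInstance
  decEqE := inferInstance
  ends := fun p => p.1
  loopless := fun p => Fin.ne_of_lt p.2

private theorem fin_succ_ne {n : ℕ} (hn : 2 ≤ n) (i : Fin n)
    (hv : (i : ℕ) = ((i : ℕ) + 1) % n) : False := by
  have hi := i.isLt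
  by_cases hlt : (i : ℕ) + 1 < n
  · rw [Nat.mod_eq_of_lt hlt] at hv; omega
  · have he : (i : ℕ) + 1 = n := by omega
    rw [he, Nat.mod_self] at hv; omega

/-- The cycle `C_n` (for `n ≥ 2`); `C_2` is a digon. -/
def cycleGraph (n : ℕ) (hn : 2 ≤ n) : Multigraph where
  V := Fin n
  fintypeV := inferInstance
  decEqV := inferInstance
  E := Fin n
  fintypeE := inferInstance
  decEqE := inferInstance
  ends := fun i => (i, ⟨((i : ℕ) + 1) % n, Nat.mod_lt _ (by omega)⟩)
  loopless := fun i h => fin_succ_ne hn i (congrArg Fin.val h)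

/-- The wheel `W_n` (for `n ≥ 2`): an `n`-cycle on `some 0, …, some (n-1)` together
with a center `none` joined to every vertex of the cycle. -/
def wheelGraph (n : ℕ) (hn : 2 ≤ n) : Multigraph where
  V := Option (Fin n)
  fintypeV := inferInstance
  decEqV := inferInstance
  E := Fin n ⊕ Fin n
  fintypeE := inferInstance
  decEqE := inferInstance
  ends := fun e => match e with
    | .inl i => (some i, some ⟨((i : ℕ) + 1) % n, Nat.mod_lt _ (by omega)⟩)
    | .inr i => (none, some i)
  loopless := by
    rintro (i | i) h
    · exact fin_succ_ne hn i (congrArg Fin.val (Option.some_injective _ h))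
    · exact Option.some_ne_none i h.symm


/-!
A nowhere-zero `ℤ₃`-valued function `f` on the edges with boundary `b` gives the required
orientation: orient `e` along its reference direction iff `f e = 1`. On the wheel, choose
nonzero values `y a` on the rim edges `a → a + 1`; the spoke at `a` is then forced to carry
`y a - y (a - 1) - b a`, and the boundary at the center is automatic since `∑ b = 0`. So one
needs a cyclic sequence of nonzero `y a` with `y a ≠ y (a - 1) + b a`. Each condition excludes
one of the two nonzero values, so the `y a` can be chosen greedily around the cycle starting at
a vertex `j` with `b j ≠ 0` and `y j = b j`, which makes the condition at `j` hold whatever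
`y (j - 1)` is. If `b` vanishes on the rim, `y` must alternate between `1` and `-1`, which closes
up exactly because the cycle is even.
-/

namespace Multigraph

variable (G : Multigraph)

def boundary (f : G.E → ZMod 3) (v : G.V) : ZMod 3 :=
  ∑ e, ((if (G.ends e).1 = v then f e else 0) - if (G.ends e).2 = v then f e else 0)

variable {G}

theorem sum_boundary (f : G.E → ZMod 3) : ∑ v, G.boundary f v = 0 := by
  simp only [boundary]
  rw [Finset.sum_comm]
  simp [Finset.sum_sub_distrib]

theorem boundary_eq_of_forall_ne {f : G.E → ZMod 3} {b : G.V → ZMod 3} (hb : ∑ v, b v = 0)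
    (v₀ : G.V) (h : ∀ v, v ≠ v₀ → G.boundary f v = b v) : G.boundary f v₀ = b v₀ := by
  have key := Finset.add_sum_erase Finset.univ (G.boundary f) (Finset.mem_univ v₀)
  rw [← Finset.add_sum_erase Finset.univ b (Finset.mem_univ v₀),
    Finset.sum_congr rfl fun v hv => (h v (Finset.ne_of_mem_erase hv)).symm] at hb
  rw [sum_boundary] at key
  exact add_right_cancel (key.trans hb.symm)

theorem outDeg_sub_inDeg {f : G.E → ZMod 3} (hf : ∀ e, f e ≠ 0) (v : G.V) :
    (G.outDeg (fun e => f e = 1) v : ZMod 3) - G.inDeg (fun e => f e = 1) v =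
      G.boundary f v := by
  rw [outDeg, inDeg, Finset.card_filter, Finset.card_filter]
  push_cast
  rw [← Finset.sum_sub_distrib]
  refine Finset.sum_congr rfl fun e _ => ?_
  have hfe : f e = 1 ∨ f e = -1 := by
    have hfe := hf e
    generalize f e = t at hfe ⊢
    revert t; decide
  have := G.loopless e
  rcases hfe with h | h <;> simp only [tail, head, h] <;> split_ifs <;> simp_all

theorem z3Connected_of_forall_exists_boundary
    (h : ∀ b : G.V → ZMod 3, ∑ v, b v = 0 →
      ∃ f : G.E → ZMod 3, (∀ e, f e ≠ 0) ∧ G.boundary f = b) :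
    G.Z3Connected := by
  intro b hb
  obtain ⟨f, hf, rfl⟩ := h b hb
  exact ⟨fun e => f e = 1, outDeg_sub_inDeg hf⟩

end Multigraph

theorem exists_seq_ne_zero_and_succ_ne_add (c : ℕ → ZMod 3) {z₀ : ZMod 3} (hz₀ : z₀ ≠ 0) :
    ∃ z : ℕ → ZMod 3, z 0 = z₀ ∧ (∀ m, z m ≠ 0) ∧ ∀ m, z (m + 1) ≠ z m + c (m + 1) := by
  let z : ℕ → ZMod 3 := fun m =>
    Nat.rec z₀ (fun m zm => if zm + c (m + 1) = 1 then -1 else 1) m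
  refine ⟨z, rfl, fun m => ?_, fun m => ?_⟩
  · cases m with
    | zero => exact hz₀
    | succ m => change ite _ _ _ ≠ 0; split_ifs <;> decide
  · change ite _ _ _ ≠ _
    split_ifs with h
    · rw [h]; decide
    · exact Ne.symm h

section CycleLabelling

variable {n : ℕ} [NeZero n]

/-- `y` are the rim values of a nowhere-zero flow on the wheel with boundary `c` on the rim:
the spoke at `a` then carries `y a - y (a - 1) - c a`. -/
def IsRimLabelling (c y : Fin n → ZMod 3) : Prop :=
  (∀ a, y a ≠ 0) ∧ ∀ a, y a ≠ y (a - 1) + c a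

theorem isRimLabelling_of_path {c : Fin n → ZMod 3} {z : ℕ → ZMod 3} (hz : ∀ m, z m ≠ 0)
    (hstep : ∀ m (hm : m + 1 < n), z (m + 1) ≠ z m + c ⟨m + 1, hm⟩)
    (hclose : z 0 ≠ z (n - 1) + c 0) : IsRimLabelling c fun a => z a := by
  refine ⟨fun a => hz a, fun a => ?_⟩
  by_cases ha : a = 0
  · subst ha
    obtain ⟨n, rfl⟩ := Nat.exists_eq_succ_of_ne_zero (NeZero.ne n)
    simpa using hclose
  · obtain ⟨m, hm⟩ := Nat.exists_eq_succ_of_ne_zero (Fin.val_ne_zero_iff.mpr ha)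
    have hprev : ((a - 1 : Fin n) : ℕ) = m := by rw [Fin.val_sub_one_of_ne_zero ha, hm]; rfl
    have ha' : a = ⟨m + 1, by omega⟩ := Fin.ext hm
    change z a ≠ z (a - 1 : Fin n) + c a
    rw [hprev, hm, ha']
    exact hstep m _

theorem exists_isRimLabelling_of_ne_zero {c : Fin n → ZMod 3} (hc : c 0 ≠ 0) :
    ∃ y, IsRimLabelling c y := by
  obtain ⟨z, hz₀, hz, hstep⟩ :=
    exists_seq_ne_zero_and_succ_ne_add (fun m => if hm : m < n then c ⟨m, hm⟩ else 0) hc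
  refine ⟨_, isRimLabelling_of_path hz (fun m hm => by simpa [hm] using hstep m) ?_⟩
  -- `z 0 = c 0`, so the closing condition only asks for `z (n - 1) ≠ 0`
  rw [hz₀]
  simpa using hz (n - 1)

theorem exists_isRimLabelling_zero (hn : Even n) :
    ∃ y, IsRimLabelling (0 : Fin n → ZMod 3) y := by
  have hodd : Odd (n - 1) := Nat.Even.sub_odd (Nat.one_le_iff_ne_zero.mpr (NeZero.ne n)) hn odd_one
  refine ⟨_, isRimLabelling_of_path (z := fun m => (-1) ^ m) (fun m => by simp)
    (fun m _ => ?_) ?_⟩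
  · rw [pow_succ, Pi.zero_apply, add_zero]
    rcases neg_one_pow_eq_or (ZMod 3) m with h | h <;> rw [h] <;> decide
  · rw [hodd.neg_one_pow, Pi.zero_apply, add_zero]; decide

theorem IsRimLabelling.rotate {c y : Fin n → ZMod 3} (j : Fin n)
    (h : IsRimLabelling (fun i => c (j + i)) y) : IsRimLabelling c fun a => y (a - j) := by
  refine ⟨fun a => h.1 _, fun a => ?_⟩
  simpa [sub_right_comm a 1 j] using h.2 (a - j)

theorem exists_isRimLabelling (hn : Even n) (c : Fin n → ZMod 3) : ∃ y, IsRimLabelling c y := by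
  obtain rfl | hc := eq_or_ne c 0
  · exact exists_isRimLabelling_zero hn
  obtain ⟨j, hj⟩ := Function.ne_iff.mp hc
  obtain ⟨y, hy⟩ :=
    exists_isRimLabelling_of_ne_zero (c := fun i => c (j + i)) (by simpa using hj)
  exact ⟨_, hy.rotate j⟩

end CycleLabelling

theorem wheelGraph_boundary_some {n : ℕ} (hn : 2 ≤ n) [NeZero n] (y x : Fin n → ZMod 3)
    (a : Fin n) : (wheelGraph n hn).boundary (Sum.elim y x) (some a) = y a - y (a - 1) - x a := by
  have hsucc (i : Fin n) : (⟨(i + 1) % n, Nat.mod_lt _ (NeZero.pos n)⟩ : Fin n) = i + 1 :=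
    Fin.ext (by simp [Fin.val_add, Nat.mod_eq_of_lt (show 1 < n by omega)])
  change ∑ e : Fin n ⊕ Fin n, _ = _
  rw [Fintype.sum_sum_type]
  simp [wheelGraph, Finset.sum_sub_distrib, hsucc, ← eq_sub_iff_add_eq]

/-- Every even wheel `W_{2k}` (`k ≥ 1`) is `ℤ₃`-connected. -/
theorem evenWheel_z3Connected (k : ℕ) (hk : 1 ≤ k) :
    (wheelGraph (2 * k) (by omega)).Z3Connected := by
  have : NeZero (2 * k) := ⟨by omega⟩
  refine Multigraph.z3Connected_of_forall_exists_boundary fun b hb => ?_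
  obtain ⟨y, hy0, hy⟩ := exists_isRimLabelling (even_two_mul k) fun a => b (some a)
  let x a := y a - y (a - 1) - b (some a)
  have hx0 a : x a ≠ 0 := fun h => hy a (by linear_combination h)
  have hrim a :
      (wheelGraph (2 * k) (by omega)).boundary (Sum.elim y x) (some a) = b (some a) := by
    rw [wheelGraph_boundary_some]
    ring
  have hcenter := Multigraph.boundary_eq_of_forall_ne hb none fun v hv => by
    obtain ⟨a, rfl⟩ := Option.ne_none_iff_exists'.mp hv
    exact hrim a
  refine ⟨Sum.elim y x, Sum.forall.mpr ⟨hy0, hx0⟩, funext ?_⟩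
  rintro (_ | a)
  exacts [hcenter, hrim a]
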